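/- Let p be a prime and k a field of characteristic p. Let A be an associative k-algebra, M an A-module, and let ∂ and σ be A-linear endomorphisms of M satisfying ∂∘σ − σ∘∂ = id_M. Then the A-linear endomorphism h := −σ^{p−1} satisfies ∑_{i=0}^{p−1} ∂^{p−1−i} ∘ h ∘ ∂^{i} = id_M. (This is the forward direction of the criterion: a p-complex admitting σ with [∂,σ] = id is null-homotopic.) -/
import Mathlib

open LinearMap Finset

section Aux

variable {R : Type*} [Ring R]

/-- evaluation of the iterated commutator `ad(D)^n` via the binomial theorem. -/
lemma ad_pow_apply (D x : R) (n : ℕ) :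
    (((mulLeft ℤ D - mulRight ℤ D) : Module.End ℤ R) ^ n) x
      = ∑ m ∈ range (n + 1),
          ((-1 : ℤ) ^ (n - m)) • ((n.choose m) • (D ^ m * x * D ^ (n - m))) := by
  have hc : Commute (mulLeft ℤ D) (-(mulRight ℤ D)) :=
    (commute_mulLeft_right (R := ℤ) D D).neg_right
  have hpow := hc.add_pow n
  rw [sub_eq_add_neg, hpow]
  rw [LinearMap.coe_sum, Finset.sum_apply]
  refine Finset.sum_congr rfl fun m hm => ?_
  rcases Nat.even_or_odd (n - m) with hpar | hpar <;>
    simp [neg_pow, hpar.neg_one_pow, Module.End.mul_apply, Module.End.natCast_apply,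
      pow_mulLeft, pow_mulRight, mulLeft_apply, mulRight_apply, smul_mul_assoc,
      mul_smul_comm, mul_assoc, LinearMap.smul_apply, Module.End.one_apply,
      LinearMap.neg_apply, mul_neg, neg_mul] <;>
    rw [← mul_assoc, ← (Nat.cast_commute (n.choose m) (D ^ m)).eq, mul_assoc]

/-- commutator of `D` with powers of `σ` -/
lemma comm_pow (D σ : R) (h : D * σ - σ * D = 1) (m : ℕ) :
    D * σ ^ m - σ ^ m * D = m • σ ^ (m - 1) := by
  induction m with
  | zero => simp
  | succ n ih =>
      have key : D * σ ^ (n + 1) - σ ^ (n + 1) * D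
          = σ * (D * σ ^ n - σ ^ n * D) + (D * σ - σ * D) * σ ^ n := by
        rw [pow_succ']
        noncomm_ring
      rw [key, ih, h]
      cases n with
      | zero => simp
      | succ j =>
          simp only [Nat.add_sub_cancel, one_mul, mul_smul_comm, ← pow_succ',
            succ_nsmul, mul_add]

/-- iterated commutator on powers of `σ` -/
lemma ad_pow_sigma (D σ : R) (h : D * σ - σ * D = 1) (n j : ℕ) :
    (((mulLeft ℤ D - mulRight ℤ D) : Module.End ℤ R) ^ j) (σ ^ n)
      = (n.descFactorial j) • σ ^ (n - j) := by
  induction j with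
  | zero => simp
  | succ i ih =>
      rw [pow_succ', Module.End.mul_apply, ih, map_nsmul]
      have : ((mulLeft ℤ D - mulRight ℤ D) : Module.End ℤ R) (σ ^ (n - i))
          = (n - i) • σ ^ (n - i - 1) := by
        simp only [LinearMap.sub_apply, mulLeft_apply, mulRight_apply]
        exact comm_pow D σ h (n - i)
      rw [this, smul_smul, Nat.descFactorial_succ, Nat.sub_sub]
      ring_nf

variable {p : ℕ}

/-- `C(p-1, m) ≡ (-1)^m` in a ring where `p = 0`. -/
lemma choose_cast (hp : p.Prime) (hp0 : (p : R) = 0) :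
    ∀ m, m < p → (((p - 1).choose m : ℕ) : R) = (-1 : R) ^ m := by
  intro m
  induction m with
  | zero => simp
  | succ i ih =>
      intro him
      have hi : i < p := Nat.lt_of_succ_lt him
      have pascal : (p - 1).choose i + (p - 1).choose (i + 1) = p.choose (i + 1) := by
        conv_rhs => rw [← Nat.succ_pred_eq_of_pos hp.pos]
        rw [Nat.choose_succ_succ]
        rfl
      have hdvd : p ∣ p.choose (i + 1) :=
        hp.dvd_choose_self (Nat.succ_ne_zero i) him
      obtain ⟨t, ht⟩ := hdvd
      have hcast : ((p - 1).choose i : R) + ((p - 1).choose (i + 1) : R) = 0 := by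
        rw [← Nat.cast_add, pascal, ht, Nat.cast_mul, hp0, zero_mul]
      rw [ih hi] at hcast
      rw [add_comm] at hcast
      rw [eq_neg_of_add_eq_zero_left hcast, pow_succ, mul_neg_one]

/-- Wilson's theorem transported: `(p-1)! = -1` in a ring where `p = 0`. -/
lemma factorial_cast (hp : p.Prime) (hp0 : (p : R) = 0) :
    (((p - 1).factorial : ℕ) : R) = -1 := by
  haveI : Fact p.Prime := ⟨hp⟩
  have hw : (((p - 1).factorial : ℕ) : ZMod p) = -1 := ZMod.wilsons_lemma p
  have hz : ((((p - 1).factorial + 1 : ℕ)) : ZMod p) = 0 := by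
    push_cast
    rw [hw]
    ring
  obtain ⟨t, ht⟩ := (ZMod.natCast_eq_zero_iff _ p).mp hz
  have := congrArg (fun n : ℕ => (n : R)) ht
  push_cast at this
  rw [hp0, zero_mul] at this
  exact eq_neg_of_add_eq_zero_left this

lemma neg_one_pow_p_sub_one (hp : p.Prime) (hp0 : (p : R) = 0) :
    (-1 : R) ^ (p - 1) = 1 := by
  rcases hp.eq_two_or_odd' with h2 | hodd
  · subst h2
    have h20 : (1 : R) + 1 = 0 := by
      have : ((2 : ℕ) : R) = 0 := hp0
      simpa [one_add_one_eq_two] using this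
    have : (-1 : R) = 1 := (eq_neg_of_add_eq_zero_left h20).symm
    simp [this]
  · have heven : Even (p - 1) := Nat.Odd.sub_odd hodd odd_one
    exact heven.neg_one_pow

end Aux

/-- over a field of characteristic `p`, if `∂` and `σ` are `A`-linear
endomorphisms of an `A`-module `M` with `∂ ∘ σ - σ ∘ ∂ = id`, then
`h := -σ^(p-1)` satisfies `∑_{i=0}^{p-1} ∂^(p-1-i) ∘ h ∘ ∂^i = id`. -/
theorem stmt_0 (p : ℕ) (hp : p.Prime) (k : Type*) [Field k] [CharP k p]
    (A : Type*) [Ring A] [Algebra k A]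
    (M : Type*) [AddCommGroup M] [Module k M] [Module A M] [IsScalarTower k A M]
    (D σ : Module.End A M) (h : D * σ - σ * D = 1) :
    (Finset.range p).sum (fun i => D ^ (p - 1 - i) * (-(σ ^ (p - 1))) * D ^ i) = 1 := by
  have hp0 : ((p : ℕ) : Module.End A M) = 0 := by
    ext m
    show ((p : ℕ) : Module.End A M) m = 0
    rw [Module.End.natCast_apply, ← Nat.cast_smul_eq_nsmul k, CharP.cast_eq_zero k p,
      zero_smul]
  have hq : p - 1 + 1 = p := Nat.succ_pred_eq_of_pos hp.pos
  -- the key sum equals -1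
  have hmain : ∑ m ∈ range p, D ^ m * σ ^ (p - 1) * D ^ (p - 1 - m) = -1 := by
    have hfa := ad_pow_apply D (σ ^ (p - 1)) (p - 1)
    rw [hq] at hfa
    have hcoef : ∀ m ∈ range p,
        ((-1 : ℤ) ^ (p - 1 - m)) •
            (((p - 1).choose m) • (D ^ m * σ ^ (p - 1) * D ^ (p - 1 - m)))
          = D ^ m * σ ^ (p - 1) * D ^ (p - 1 - m) := by
      intro m hm
      rw [Finset.mem_range] at hm
      rw [nsmul_eq_mul, choose_cast hp hp0 m hm, zsmul_eq_mul]
      push_cast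
      rw [← mul_assoc, ← pow_add]
      have he : p - 1 - m + m = p - 1 := by omega
      rw [he, neg_one_pow_p_sub_one hp hp0, one_mul]
    rw [Finset.sum_congr rfl hcoef] at hfa
    have hfs := ad_pow_sigma D σ h (p - 1) (p - 1)
    rw [Nat.sub_self, pow_zero, Nat.descFactorial_self, nsmul_eq_mul, mul_one] at hfs
    rw [← hfa, hfs, factorial_cast hp hp0]
  -- relate the goal's sum to the key sum by reflecting the index
  have hrefl : ∑ i ∈ range p, D ^ (p - 1 - i) * σ ^ (p - 1) * D ^ i
      = ∑ m ∈ range p, D ^ m * σ ^ (p - 1) * D ^ (p - 1 - m) := by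
    rw [← Finset.sum_range_reflect (fun m => D ^ m * σ ^ (p - 1) * D ^ (p - 1 - m)) p]
    refine Finset.sum_congr rfl fun i hi => ?_
    rw [Finset.mem_range] at hi
    have h1 : p - 1 - (p - 1 - i) = i := by omega
    rw [h1]
  calc (Finset.range p).sum (fun i => D ^ (p - 1 - i) * (-(σ ^ (p - 1))) * D ^ i)
      = -∑ i ∈ range p, D ^ (p - 1 - i) * σ ^ (p - 1) * D ^ i := by
        rw [← Finset.sum_neg_distrib]
        exact Finset.sum_congr rfl fun i _ => by rw [mul_neg, neg_mul]
    _ = 1 := by rw [hrefl, hmain, neg_neg]
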